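/- arXiv:2209.03492 — 5 statements merged into one kernel-verified Lean document; each statement's English description precedes it below -/
import Mathlib

section
/- The matrix M of size (ℓ+1)×(ℓ+1) with entries M(i,j) = C(b−j, i) (binomial coefficient, rows i = 0,…,ℓ, columns j = 0,…,ℓ), where b > ℓ, has determinant equal to ±1 (i.e., its determinant is a unit in ℤ). -/
/-!
Write `b - j = (ℓ - j) + c` with `c = b - ℓ`. Vandermonde's identity
`C((ℓ - j) + c, i) = ∑ₖ C(c, i - k) C(ℓ - j, k)` factors the matrix as a lower unitriangular
Toeplitz matrix times the matrix `C(ℓ - j, k)`, which is the upper unitriangular Pascal matrix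
with its columns reversed. Hence the determinant is the sign of the reversal permutation.
-/

open Finset Matrix

namespace Matrix

variable {R : Type*} [CommRing R]

theorem det_toeplitz_choose (n c : ℕ) :
    det (of fun i k : Fin n => if k ≤ i then (c.choose (i - k : ℕ) : R) else 0) = 1 := by
  rw [det_of_isLowerTriangular _ fun i k (h : i < k) => by simp [Fin.not_le.mpr h]]
  exact prod_eq_one fun i _ => by simp

theorem det_pascal (n : ℕ) : det (of fun k j : Fin n => ((j : ℕ).choose k : R)) = 1 := by
  rw [det_of_isUpperTriangular fun k j (h : j < k) => by simp [Nat.choose_eq_zero_of_lt h]]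
  exact prod_eq_one fun i _ => by simp

theorem det_choose_rev (n : ℕ) :
    det (of fun k j : Fin (n + 1) => ((n - j : ℕ).choose k : R)) =
      Equiv.Perm.sign (Fin.revPerm : Equiv.Perm (Fin (n + 1))) := by
  have hrev : (of fun k j : Fin (n + 1) => ((n - j : ℕ).choose k : R)) =
      (of fun k j : Fin (n + 1) => ((j : ℕ).choose k : R)).submatrix id Fin.revPerm := by
    ext k j
    simp only [of_apply, submatrix_apply, id_eq, Fin.revPerm_apply, Fin.val_rev]
    congr 2
    omega
  rw [hrev, det_permute', det_pascal, mul_one]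

theorem of_choose_add_sub_eq_mul (n c : ℕ) :
    (of fun i j : Fin (n + 1) => ((n - j + c : ℕ).choose i : R)) =
      (of fun i k : Fin (n + 1) => if k ≤ i then (c.choose (i - k : ℕ) : R) else 0) *
        of fun k j : Fin (n + 1) => ((n - j : ℕ).choose k : R) := by
  ext i j
  have hi : (i : ℕ) + 1 ≤ n + 1 := i.isLt
  simp only [mul_apply, of_apply, Fin.le_iff_val_le_val]
  rw [Fin.sum_univ_eq_sum_range
    (fun k => (if k ≤ (i : ℕ) then (c.choose (i - k) : R) else 0) * ((n - j).choose k : R)),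
    ← sum_subset (range_subset_range.mpr hi) fun k _ hk => by
      rw [if_neg (by simpa [Nat.lt_succ_iff] using hk), zero_mul],
    Nat.add_choose_eq, Nat.cast_sum, Nat.sum_antidiagonal_eq_sum_range_succ_mk]
  refine sum_congr rfl fun k hk => ?_
  rw [if_pos (Nat.lt_succ_iff.mp (mem_range.mp hk)), Nat.cast_mul, mul_comm]

theorem isUnit_det_choose_add_sub (n c : ℕ) :
    IsUnit (det (of fun i j : Fin (n + 1) => ((n - j + c : ℕ).choose i : R))) := by
  rw [of_choose_add_sub_eq_mul, det_mul, det_toeplitz_choose, one_mul, det_choose_rev]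
  exact (Equiv.Perm.sign _).isUnit.map (Int.castRingHom R)

end Matrix

theorem stmt_0 (ℓ b : ℕ) (hb : b > ℓ) :
    IsUnit (Matrix.det (Matrix.of fun i j : Fin (ℓ + 1) =>
      (Nat.choose (b - (j : ℕ)) (i : ℕ) : ℤ))) := by
  have hsplit : ∀ j : Fin (ℓ + 1), b - (j : ℕ) = ℓ - j + (b - ℓ) := fun j => by omega
  simpa only [hsplit] using isUnit_det_choose_add_sub (R := ℤ) ℓ (b - ℓ)
end

section
/- Let M be a block matrix of the form M = [[a, b^T, c^T],[b, B, 0],[c, 0, C]] where a is a scalar, B is m×m, C is n×n, and b ∈ ℝ^m, c ∈ ℝ^n. Write a = a₁ + a₂. Then det(xI − M) = det(xI_m − B)·det(x I_{n+1} − [[a₂, c^T],[c, C]]) + ( det(x I_{m+1} − [[a₁, b^T],[b, B]]) − x·det(xI_m − B) )·det(xI_n − C). -/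
open Polynomial

/-- The block matrix `[[a, bᵀ, cᵀ], [b, B, 0], [c, 0, C]]`. -/
def bigBlock {m n : ℕ} (a : ℝ) (b : Fin m → ℝ) (c : Fin n → ℝ)
    (B : Matrix (Fin m) (Fin m) ℝ) (C : Matrix (Fin n) (Fin n) ℝ) :
    Matrix (Unit ⊕ (Fin m ⊕ Fin n)) (Unit ⊕ (Fin m ⊕ Fin n)) ℝ :=
  Matrix.of fun i j =>
    match i, j with
    | .inl _, .inl _ => a
    | .inl _, .inr (.inl k) => b k
    | .inl _, .inr (.inr k) => c k
    | .inr (.inl k), .inl _ => b k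
    | .inr (.inr k), .inl _ => c k
    | .inr (.inl k), .inr (.inl l) => B k l
    | .inr (.inr k), .inr (.inr l) => C k l
    | _, _ => 0

/-- The bordered matrix `[[a, bᵀ], [b, B]]`. -/
def corner {m : ℕ} (a : ℝ) (b : Fin m → ℝ) (B : Matrix (Fin m) (Fin m) ℝ) :
    Matrix (Unit ⊕ Fin m) (Unit ⊕ Fin m) ℝ :=
  Matrix.of fun i j =>
    match i, j with
    | .inl _, .inl _ => a
    | .inl _, .inr k => b k
    | .inr k, .inl _ => b k
    | .inr k, .inr l => B k l

/-!
The determinant is linear in the first row. Splitting the first row of `xI - M` as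
`(x - a₁, -bᵀ, 0) + (-a₂, 0, -cᵀ)` writes `det (xI - M)` as a sum of two determinants, each block
triangular once the indices are reordered: they factor as
`det [[x - a₁, -bᵀ], [-b, xI - B]] · det (xI - C)` and `det (xI - B) · det [[-a₂, -cᵀ], [-c, xI - C]]`.
The last determinant is affine in its top-left entry, so it equals
`det (xI - [[a₂, cᵀ], [c, C]]) - x · det (xI - C)`.
-/

namespace Matrix

variable {R : Type*} [CommRing R] {ι κ : Type*} [Fintype ι] [DecidableEq ι]
  [Fintype κ] [DecidableEq κ]

def bordered (d : R) (u u' : ι → R) (P : Matrix ι ι R) : Matrix (Unit ⊕ ι) (Unit ⊕ ι) R :=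
  fromBlocks (of fun _ _ => d) (replicateRow Unit u) (replicateCol Unit u') P

theorem det_bordered_zero (d : R) (u' : ι → R) (P : Matrix ι ι R) :
    (bordered d 0 u' P).det = d * P.det := by
  rw [bordered, replicateRow_zero, det_fromBlocks_zero₁₂, det_unique]
  rfl

theorem det_bordered_add (d₁ d₂ : R) (u₁ u₂ u' : ι → R) (P : Matrix ι ι R) :
    (bordered (d₁ + d₂) (u₁ + u₂) u' P).det
      = (bordered d₁ u₁ u' P).det + (bordered d₂ u₂ u' P).det := by
  set M := bordered d₁ u₁ u' P
  have hrow (d : R) (u : ι → R) :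
      bordered d u u' P = M.updateRow (.inl ()) (bordered d u u' P (.inl ())) := by
    ext (_ | _) (_ | _) <;> simp [M, bordered, updateRow_apply]
  have hsum : bordered (d₁ + d₂) (u₁ + u₂) u' P (.inl ())
      = M (.inl ()) + bordered d₂ u₂ u' P (.inl ()) := by
    ext (_ | _) <;> simp [M, bordered]
  rw [hrow, hsum, det_updateRow_add, updateRow_eq_self, ← hrow]

theorem det_bordered_add_topLeft (d t : R) (u u' : ι → R) (P : Matrix ι ι R) :
    (bordered (d + t) u u' P).det = (bordered d u u' P).det + t * P.det := by
  simpa [det_bordered_zero] using det_bordered_add d t u 0 u' P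

theorem det_bordered_fromBlocks_elim_zero (d : R) (u u' : ι → R) (v' : κ → R)
    (P : Matrix ι ι R) (Q : Matrix κ κ R) :
    (bordered d (u ⊕ᵥ 0) (u' ⊕ᵥ v') (fromBlocks P 0 0 Q)).det
      = (bordered d u u' P).det * Q.det := by
  let e : Unit ⊕ (ι ⊕ κ) ≃ (Unit ⊕ ι) ⊕ κ := (Equiv.sumAssoc _ _ _).symm
  have hblock : bordered d (u ⊕ᵥ 0) (u' ⊕ᵥ v') (fromBlocks P 0 0 Q)
      = (fromBlocks (bordered d u u' P) 0 (fromCols (replicateCol Unit v') 0) Q).submatrix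
          e e := by
    ext (_ | _ | _) (_ | _ | _) <;> simp [e, bordered]
  rw [hblock, det_submatrix_equiv_self, det_fromBlocks_zero₁₂]

theorem det_bordered_fromBlocks_zero_elim (d : R) (u' : ι → R) (v v' : κ → R)
    (P : Matrix ι ι R) (Q : Matrix κ κ R) :
    (bordered d (0 ⊕ᵥ v) (u' ⊕ᵥ v') (fromBlocks P 0 0 Q)).det
      = P.det * (bordered d v v' Q).det := by
  let e : Unit ⊕ (ι ⊕ κ) ≃ ι ⊕ (Unit ⊕ κ) :=
    (Equiv.sumAssoc _ _ _).symm.trans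
      (((Equiv.sumComm _ _).sumCongr (Equiv.refl _)).trans (Equiv.sumAssoc _ _ _))
  have hblock : bordered d (0 ⊕ᵥ v) (u' ⊕ᵥ v') (fromBlocks P 0 0 Q)
      = (fromBlocks P (fromCols (replicateCol Unit u') 0) 0 (bordered d v v' Q)).submatrix
          e e := by
    ext (_ | _ | _) (_ | _ | _) <;> simp [e, bordered]
  rw [hblock, det_submatrix_equiv_self, det_fromBlocks_zero₂₁]

theorem det_bordered_fromBlocks (d₁ d₂ : R) (u u' : ι → R) (v v' : κ → R)
    (P : Matrix ι ι R) (Q : Matrix κ κ R) :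
    (bordered (d₁ + d₂) (u ⊕ᵥ v) (u' ⊕ᵥ v') (fromBlocks P 0 0 Q)).det
      = (bordered d₁ u u' P).det * Q.det + P.det * (bordered d₂ v v' Q).det := by
  have hsplit : u ⊕ᵥ v = (u ⊕ᵥ (0 : κ → R)) + ((0 : ι → R) ⊕ᵥ v) := by
    rw [← Sum.elim_add_add, add_zero, zero_add]
  rw [hsplit, det_bordered_add, det_bordered_fromBlocks_elim_zero,
    det_bordered_fromBlocks_zero_elim]

theorem charmatrix_bordered (d : R) (u u' : ι → R) (P : Matrix ι ι R) :
    (bordered d u u' P).charmatrix = bordered (X - C d) (-(C ∘ u)) (-(C ∘ u')) P.charmatrix := by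
  ext (_ | _) (_ | _) <;> simp [bordered, charmatrix_fromBlocks]

end Matrix

open Matrix

theorem bigBlock_eq_bordered {m n : ℕ} (a : ℝ) (b : Fin m → ℝ) (c : Fin n → ℝ)
    (P : Matrix (Fin m) (Fin m) ℝ) (Q : Matrix (Fin n) (Fin n) ℝ) :
    bigBlock a b c P Q = bordered a (b ⊕ᵥ c) (b ⊕ᵥ c) (fromBlocks P 0 0 Q) := by
  ext (_ | _ | _) (_ | _ | _) <;> rfl

theorem corner_eq_bordered {m : ℕ} (a : ℝ) (b : Fin m → ℝ) (P : Matrix (Fin m) (Fin m) ℝ) :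
    corner a b P = bordered a b b P := by
  ext (_ | _) (_ | _) <;> rfl

theorem stmt_8 {m n : ℕ} (a a₁ a₂ : ℝ) (ha : a = a₁ + a₂)
    (b : Fin m → ℝ) (c : Fin n → ℝ)
    (B : Matrix (Fin m) (Fin m) ℝ) (C : Matrix (Fin n) (Fin n) ℝ) :
    (bigBlock a b c B C).charpoly
      = B.charpoly * (corner a₂ c C).charpoly
        + ((corner a₁ b B).charpoly - X * B.charpoly) * C.charpoly := by
  subst ha
  have hsplit : X - Polynomial.C (a₁ + a₂) = (X - Polynomial.C a₁) + -Polynomial.C a₂ := by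
    rw [C_add]; ring
  have hcorner : X - Polynomial.C a₂ = -Polynomial.C a₂ + X := by ring
  simp only [charpoly, bigBlock_eq_bordered, corner_eq_bordered, charmatrix_bordered,
    charmatrix_fromBlocks, Matrix.map_zero _ C_0, neg_zero, Sum.comp_elim, ← Sum.elim_neg_neg]
  rw [hsplit, det_bordered_fromBlocks, hcorner, det_bordered_add_topLeft]
  ring
end

section
/- Fix natural numbers n and b with b ≤ n, and rational numbers ω(i,j) for 0 ≤ i ≤ b, 0 ≤ j ≤ n−b (set ω(i,j)=0 outside this range). Define c(k,ℓ) = Σ_i C(b−i, k)·ω(i, ℓ−i) for 0 ≤ k ≤ b and 0 ≤ ℓ ≤ n. Then the values ω(i,j) are uniquely determined by the values c(k,ℓ): if two families ω and ω' yield the same c(k,ℓ) for all k,ℓ, then ω = ω'. -/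
/-!
The map `ω ↦ c` is triangular. Pairing the diagonal `ℓ = i₀ + j` with `k = b - i₀` kills every
row `i > i₀` (as `(b - i).choose (b - i₀) = 0` there) and leaves the coefficient `1` on
`ω i₀ j`; so by induction on `i₀` a family with vanishing `c` vanishes row by row.
-/

open Finset

variable {R : Type*}

def diagonalChooseSum [NonAssocSemiring R] (b : ℕ) (ω : ℕ → ℕ → R) (k ℓ : ℕ) : R :=
  ∑ i ∈ range (ℓ + 1), ((b - i).choose k : R) * ω i (ℓ - i)

theorem diagonalChooseSum_sub [NonAssocRing R] (b : ℕ) (ω ω' : ℕ → ℕ → R) (k ℓ : ℕ) :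
    diagonalChooseSum b (ω - ω') k ℓ = diagonalChooseSum b ω k ℓ - diagonalChooseSum b ω' k ℓ := by
  simp only [diagonalChooseSum, Pi.sub_apply, mul_sub, sum_sub_distrib]

theorem diagonalChooseSum_eq_of_vanishing_rows [NonAssocSemiring R] {b i₀ : ℕ}
    {δ : ℕ → ℕ → R} (hi₀ : i₀ ≤ b) (hlow : ∀ i < i₀, ∀ j, δ i j = 0)
    (hhigh : ∀ i j, b < i → δ i j = 0) (j : ℕ) :
    diagonalChooseSum b δ (b - i₀) (i₀ + j) = δ i₀ j := by
  rw [diagonalChooseSum, sum_eq_single i₀]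
  · rw [Nat.choose_self, Nat.cast_one, one_mul, Nat.add_sub_cancel_left]
  · intro i _ hne
    rcases lt_or_gt_of_ne hne with hlt | hgt
    · rw [hlow i hlt, mul_zero]
    · by_cases hib : i ≤ b
      · rw [Nat.choose_eq_zero_of_lt (by omega), Nat.cast_zero, zero_mul]
      · rw [hhigh i _ (by omega), mul_zero]
  · intro h
    exact absurd (mem_range.mpr (by omega)) h

theorem eq_zero_of_diagonalChooseSum_eq_zero [NonAssocSemiring R] {n b : ℕ} (hb : b ≤ n)
    {δ : ℕ → ℕ → R} (hδ : ∀ i j, (b < i ∨ n - b < j) → δ i j = 0)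
    (hc : ∀ k ℓ, k ≤ b → ℓ ≤ n → diagonalChooseSum b δ k ℓ = 0) : δ = 0 := by
  suffices h : ∀ i j, δ i j = 0 from funext fun i ↦ funext (h i)
  intro i
  induction i using Nat.strong_induction_on with
  | _ i ih =>
    intro j
    by_cases hi : b < i
    · exact hδ i j (Or.inl hi)
    by_cases hj : n - b < j
    · exact hδ i j (Or.inr hj)
    rw [← diagonalChooseSum_eq_of_vanishing_rows (by omega) ih (fun i j h ↦ hδ i j (Or.inl h))]
    exact hc _ _ (by omega) (by omega)

theorem stmt_9 (n b : ℕ) (hb : b ≤ n) (ω ω' : ℕ → ℕ → ℚ)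
    (hω : ∀ i j, (b < i ∨ n - b < j) → ω i j = 0)
    (hω' : ∀ i j, (b < i ∨ n - b < j) → ω' i j = 0)
    (hc : ∀ k ℓ, k ≤ b → ℓ ≤ n →
      (∑ i ∈ Finset.range (ℓ + 1), (Nat.choose (b - i) k : ℚ) * ω i (ℓ - i))
        = ∑ i ∈ Finset.range (ℓ + 1), (Nat.choose (b - i) k : ℚ) * ω' i (ℓ - i)) :
    ω = ω' := by
  have hδ : ∀ i j, (b < i ∨ n - b < j) → (ω - ω') i j = 0 := fun i j h ↦ by
    rw [Pi.sub_apply, Pi.sub_apply, hω i j h, hω' i j h, sub_zero]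
  have hcδ : ∀ k ℓ, k ≤ b → ℓ ≤ n → diagonalChooseSum b (ω - ω') k ℓ = 0 := fun k ℓ hk hℓ ↦ by
    rw [diagonalChooseSum_sub, sub_eq_zero]
    exact hc k ℓ hk hℓ
  exact sub_eq_zero.mp (eq_zero_of_diagonalChooseSum_eq_zero hb hδ hcδ)
end

section
/- Fix natural numbers n and b with b ≤ n. For families ω(i,j) of rationals (0 ≤ i ≤ b, 0 ≤ j ≤ n−b, zero otherwise), define c(k,ℓ) = Σ_i C(b−i, k)·ω(i, ℓ−i) and c'(k,ℓ) = Σ_j C(n−b−j, k)·ω(ℓ−j, j). If two families ω and ω̃ satisfy c(k,ℓ) = c̃(k,ℓ) for all 0 ≤ k ≤ b and all ℓ, then c'(k,ℓ) = c̃'(k,ℓ) for all 0 ≤ k ≤ n−b and all ℓ. -/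
/-! The data `c` determine `ω` itself, so they determine `c'` too. The system is triangular:
in `c (b - i) (i + j)` the row `i' = i` enters with coefficient `C(b - i, b - i) = 1`, rows
`i < i' ≤ b` have coefficient `C(b - i', b - i) = 0`, and rows `i' < i` are known by strong
induction on `i`. -/

open Finset

theorem eq_zero_of_sum_choose_mul_eq_zero {R : Type*} [Semiring R] {b : ℕ} {δ : ℕ → ℕ → R}
    (hδ : ∀ i j, b < i → δ i j = 0)
    (hc : ∀ k ℓ, k ≤ b → ∑ i ∈ range (ℓ + 1), ((b - i).choose k : R) * δ i (ℓ - i) = 0)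
    (i j : ℕ) : δ i j = 0 := by
  induction i using Nat.strong_induction_on generalizing j with
  | _ i ih =>
    by_cases hi : b < i
    · exact hδ i j hi
    have hrow := hc (b - i) (i + j) (Nat.sub_le b i)
    rwa [sum_eq_single_of_mem i (by simp), Nat.choose_self, Nat.cast_one, one_mul,
      Nat.add_sub_cancel_left] at hrow
    intro i' _ hne
    rcases hne.lt_or_gt with hlt | hgt
    · rw [ih i' hlt, mul_zero]
    · by_cases hi' : b < i'
      · rw [hδ i' _ hi', mul_zero]
      · rw [Nat.choose_eq_zero_of_lt (by omega), Nat.cast_zero, zero_mul]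

theorem stmt_10_general (n b : ℕ) (ω ω' : ℕ → ℕ → ℚ)
    (hω : ∀ i j, (b < i ∨ n - b < j) → ω i j = 0)
    (hω' : ∀ i j, (b < i ∨ n - b < j) → ω' i j = 0)
    (hc : ∀ k ℓ, k ≤ b →
      (∑ i ∈ Finset.range (ℓ + 1), (Nat.choose (b - i) k : ℚ) * ω i (ℓ - i))
        = ∑ i ∈ Finset.range (ℓ + 1), (Nat.choose (b - i) k : ℚ) * ω' i (ℓ - i)) :
    ∀ k ℓ, k ≤ n - b →
      (∑ j ∈ Finset.range (ℓ + 1), (Nat.choose (n - b - j) k : ℚ) * ω (ℓ - j) j)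
        = ∑ j ∈ Finset.range (ℓ + 1), (Nat.choose (n - b - j) k : ℚ) * ω' (ℓ - j) j := by
  have hdiff : ∀ i j, ω i j - ω' i j = 0 :=
    eq_zero_of_sum_choose_mul_eq_zero (δ := fun i j => ω i j - ω' i j)
      (fun i j hi => by rw [hω i j (.inl hi), hω' i j (.inl hi), sub_self])
      (fun k ℓ hk => by simp only [mul_sub, sum_sub_distrib, hc k ℓ hk, sub_self])
  intro k ℓ _
  exact sum_congr rfl fun j _ => by rw [sub_eq_zero.mp (hdiff (ℓ - j) j)]

theorem stmt_10 (n b : ℕ) (hb : b ≤ n) (ω ω' : ℕ → ℕ → ℚ)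
    (hω : ∀ i j, (b < i ∨ n - b < j) → ω i j = 0)
    (hω' : ∀ i j, (b < i ∨ n - b < j) → ω' i j = 0)
    (hc : ∀ k ℓ, k ≤ b →
      (∑ i ∈ Finset.range (ℓ + 1), (Nat.choose (b - i) k : ℚ) * ω i (ℓ - i))
        = ∑ i ∈ Finset.range (ℓ + 1), (Nat.choose (b - i) k : ℚ) * ω' i (ℓ - i)) :
    ∀ k ℓ, k ≤ n - b →
      (∑ j ∈ Finset.range (ℓ + 1), (Nat.choose (n - b - j) k : ℚ) * ω (ℓ - j) j)
        = ∑ j ∈ Finset.range (ℓ + 1), (Nat.choose (n - b - j) k : ℚ) * ω' (ℓ - j) j :=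
  stmt_10_general n b ω ω' hω hω' hc
end

section
/- For every k ≥ 1 there exist a tree T and a non-tree graph G, both on 4k vertices, which are cospectral for the signless Laplacian D + A. -/
open scoped Classical

/-- The signless Laplacian `D + A` of a finite simple graph, over `ℝ`. -/
noncomputable def signlessLaplacian {V : Type*} [Fintype V] (G : SimpleGraph V) :
    Matrix V V ℝ :=
  Matrix.of fun i j =>
    (if i = j then (G.degree i : ℝ) else 0) + (if G.Adj i j then 1 else 0)

/-!
Hang a copy of a rooted tree `(H, r)` on `k` vertices from every vertex of a graph `G` on four
vertices. The signless Laplacian of the result is `Q(G) ⊗ E_rr + I ⊗ Q(H)`, so conjugating by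
`U ⊗ I` replaces `Q(G)` by `U Q(G) U⁻¹`. Signless Laplacians are real symmetric, so cospectral
graphs have similar `Q`, and hanging `H` from them gives cospectral graphs. The claw `K_{1,3}`
and `K₃ ∪ K₁` both have `Q`-characteristic polynomial `x (x - 1)² (x - 4)`. From the claw we get a
connected graph with `4k - 1` edges, i.e. a tree, and from `K₃ ∪ K₁` a disconnected graph.
-/

open Finset Matrix Polynomial SimpleGraph
open scoped Kronecker

namespace SimpleGraph

variable {V W : Type*}

/-- The paper's coalescence of `G` with `H` at every vertex: `(a, r)` is the vertex `a` of `G`,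
with the copy `{a} × W` of `H` hanging from it. -/
def rootedProduct (G : SimpleGraph V) (H : SimpleGraph W) (r : W) : SimpleGraph (V × W) where
  Adj x y := x.1 = y.1 ∧ H.Adj x.2 y.2 ∨ x.2 = r ∧ y.2 = r ∧ G.Adj x.1 y.1
  symm := ⟨fun _ _ ↦ by
    rintro (⟨h₁, h₂⟩ | ⟨h₁, h₂, h₃⟩)
    exacts [.inl ⟨h₁.symm, h₂.symm⟩, .inr ⟨h₂, h₁, h₃.symm⟩]⟩
  loopless := ⟨fun _ ↦ by
    rintro (⟨-, h⟩ | ⟨-, -, h⟩)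
    exacts [H.loopless.irrefl _ h, G.loopless.irrefl _ h]⟩

variable {G : SimpleGraph V} {H : SimpleGraph W} {r : W}

@[simp]
lemma rootedProduct_adj {x y : V × W} :
    (G.rootedProduct H r).Adj x y ↔
      x.1 = y.1 ∧ H.Adj x.2 y.2 ∨ x.2 = r ∧ y.2 = r ∧ G.Adj x.1 y.1 :=
  Iff.rfl

lemma Connected.rootedProduct (hG : G.Connected) (hH : H.Connected) (r : W) :
    (G.rootedProduct H r).Connected := by
  have : Nonempty V := hG.nonempty
  have : Nonempty W := hH.nonempty
  have toRoot (x : V × W) : (G.rootedProduct H r).Reachable x (x.1, r) :=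
    (hH.preconnected x.2 r).map (⟨fun j ↦ (x.1, j), fun h ↦ Or.inl ⟨rfl, h⟩⟩ : H →g _)
  have alongRoots (a b : V) : (G.rootedProduct H r).Reachable (a, r) (b, r) :=
    (hG.preconnected a b).map (⟨fun a ↦ (a, r), fun h ↦ Or.inr ⟨rfl, rfl, h⟩⟩ : G →g _)
  exact ⟨fun x y ↦ (toRoot x).trans ((alongRoots _ _).trans (toRoot y).symm)⟩

lemma Reachable.of_rootedProduct {x y : V × W} (h : (G.rootedProduct H r).Reachable x y) :
    G.Reachable x.1 y.1 := by
  rw [reachable_iff_reflTransGen] at h ⊢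
  refine h.lift' Prod.fst fun x y hxy ↦ show Relation.ReflTransGen G.Adj x.1 y.1 from ?_
  rcases rootedProduct_adj.1 hxy with ⟨h, -⟩ | ⟨-, -, h⟩
  · exact h ▸ .refl
  · exact .single h

lemma Connected.of_rootedProduct (h : (G.rootedProduct H r).Connected) : G.Connected :=
  have : Nonempty V := ⟨h.nonempty.some.1⟩
  ⟨fun a b ↦ (h.preconnected (a, r) (b, r)).of_rootedProduct⟩

lemma adjMatrix_rootedProduct (R : Type*) [Semiring R] [DecidableEq V] [DecidableEq W]
    (G : SimpleGraph V) (H : SimpleGraph W) (r : W) :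
    (G.rootedProduct H r).adjMatrix R = G.adjMatrix R ⊗ₖ single r r 1 + 1 ⊗ₖ H.adjMatrix R := by
  ext ⟨a, i⟩ ⟨b, j⟩
  by_cases hab : a = b
  · subst hab
    simp [adjMatrix_apply, single_apply]
  · simp [adjMatrix_apply, single_apply, hab, ite_and, eq_comm]

variable [Fintype V] [Fintype W]

omit [Fintype W] in
lemma sum_adjMatrix_apply {R : Type*} [NonAssocSemiring R] (G : SimpleGraph V) (u : V) :
    ∑ v, G.adjMatrix R u v = G.degree u := by
  rw [degree_eq_sum_if_adj]
  rfl

lemma degree_rootedProduct (a : V) (i : W) :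
    (G.rootedProduct H r).degree (a, i) = H.degree i + if i = r then G.degree a else 0 := by
  rw [← Nat.cast_id ((G.rootedProduct H r).degree _), ← sum_adjMatrix_apply,
    adjMatrix_rootedProduct, Fintype.sum_prod_type]
  simp only [Matrix.add_apply, kronecker_apply, single_apply, one_apply, ite_and, mul_ite,
    ite_mul, mul_one, one_mul, mul_zero, zero_mul, sum_add_distrib]
  by_cases hi : i = r
  · subst hi
    simp [-adjMatrix_apply, sum_adjMatrix_apply, add_comm]
  · simp [-adjMatrix_apply, hi, Ne.symm hi, sum_adjMatrix_apply]

lemma card_edgeFinset_rootedProduct :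
    #(G.rootedProduct H r).edgeFinset = Fintype.card V * #H.edgeFinset + #G.edgeFinset := by
  have handshake : 2 * #(G.rootedProduct H r).edgeFinset =
      2 * (Fintype.card V * #H.edgeFinset + #G.edgeFinset) := by
    simp only [← sum_degrees_eq_twice_card_edges, Fintype.sum_prod_type, degree_rootedProduct]
    simp [sum_add_distrib, sum_degrees_eq_twice_card_edges]
    ring
  omega

lemma IsTree.rootedProduct (hG : G.IsTree) (hH : H.IsTree) (r : W) :
    (G.rootedProduct H r).IsTree := by
  rw [isTree_iff_connected_and_card]
  refine ⟨hG.connected.rootedProduct hH.connected r, ?_⟩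
  have hGcard := hG.card_edgeFinset
  have hHcard := hH.card_edgeFinset
  simp only [Nat.card_eq_fintype_card, ← edgeFinset_card, card_edgeFinset_rootedProduct,
    Fintype.card_prod]
  nlinarith

end SimpleGraph

lemma signlessLaplacian_apply {V : Type*} [Fintype V] (G : SimpleGraph V) (i j : V) :
    signlessLaplacian G i j =
      (if i = j then ∑ k, if G.Adj i k then 1 else 0 else 0) + if G.Adj i j then 1 else 0 := by
  rw [signlessLaplacian, of_apply, degree_eq_sum_if_adj]

lemma SimpleGraph.Iso.charpoly_signlessLaplacian {V W : Type*} [Fintype V] [Fintype W]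
    [DecidableEq V] [DecidableEq W] {G : SimpleGraph V} {G' : SimpleGraph W} (φ : G ≃g G') :
    (signlessLaplacian G).charpoly = (signlessLaplacian G').charpoly := by
  have : signlessLaplacian G = reindex φ.toEquiv.symm φ.toEquiv.symm (signlessLaplacian G') := by
    ext i j
    simp only [reindex_apply, Equiv.symm_symm, submatrix_apply, signlessLaplacian_apply,
      RelIso.coe_fn_toEquiv, φ.map_adj_iff, φ.injective.eq_iff]
    rw [← φ.toEquiv.sum_comp]
    simp only [RelIso.coe_fn_toEquiv, φ.map_adj_iff]
    congr!
  rw [this, charpoly_reindex]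

lemma signlessLaplacian_eq_degMatrix_add_adjMatrix {V : Type*} [Fintype V] [DecidableEq V]
    (G : SimpleGraph V) [DecidableRel G.Adj] :
    signlessLaplacian G = G.degMatrix ℝ + G.adjMatrix ℝ := by
  ext i j
  simp only [signlessLaplacian, degMatrix, diagonal_apply, of_apply, Matrix.add_apply,
    adjMatrix_apply]
  congr!

lemma isHermitian_signlessLaplacian {V : Type*} [Fintype V] (G : SimpleGraph V) :
    (signlessLaplacian G).IsHermitian := by
  rw [signlessLaplacian_eq_degMatrix_add_adjMatrix]
  exact (G.isHermitian_degMatrix ℝ).add (G.isHermitian_adjMatrix ℝ)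

lemma degMatrix_rootedProduct {V W : Type*} [Fintype V] [Fintype W] [DecidableEq V]
    [DecidableEq W] (G : SimpleGraph V) (H : SimpleGraph W) (r : W) :
    (G.rootedProduct H r).degMatrix ℝ = G.degMatrix ℝ ⊗ₖ single r r 1 + 1 ⊗ₖ H.degMatrix ℝ := by
  ext ⟨a, i⟩ ⟨b, j⟩
  by_cases hab : a = b
  · subst hab
    by_cases hij : i = j
    · subst hij
      rcases eq_or_ne i r with rfl | hi
      · simp [degMatrix, degree_rootedProduct, add_comm]
      · simp [degMatrix, degree_rootedProduct, hi, hi.symm]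
    · simp [degMatrix, single_apply, hij]
      rintro rfl rfl
      exact absurd rfl hij
  · simp [degMatrix, single_apply, hab]

lemma signlessLaplacian_rootedProduct {V W : Type*} [Fintype V] [Fintype W] [DecidableEq V]
    [DecidableEq W] (G : SimpleGraph V) (H : SimpleGraph W) (r : W) :
    signlessLaplacian (G.rootedProduct H r) =
      signlessLaplacian G ⊗ₖ single r r 1 + 1 ⊗ₖ signlessLaplacian H := by
  simp only [signlessLaplacian_eq_degMatrix_add_adjMatrix, degMatrix_rootedProduct,
    adjMatrix_rootedProduct, add_kronecker, kronecker_add]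
  abel

lemma Matrix.IsHermitian.exists_units_conj_of_charpoly_eq {𝕜 n : Type*} [RCLike 𝕜] [Fintype n]
    [DecidableEq n] {A B : Matrix n n 𝕜} (hA : A.IsHermitian) (hB : B.IsHermitian)
    (h : A.charpoly = B.charpoly) :
    ∃ U : (Matrix n n 𝕜)ˣ, A = (U : Matrix n n 𝕜) * B * (↑U⁻¹ : Matrix n n 𝕜) := by
  let u := hA.eigenvectorUnitary * star hB.eigenvectorUnitary
  refine ⟨Unitary.toUnits u, show A = Unitary.conjStarAlgAut 𝕜 _ u B from ?_⟩
  rw [Unitary.conjStarAlgAut_mul_apply, hB.conjStarAlgAut_star_eigenvectorUnitary,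
    ← (hA.eigenvalues_eq_eigenvalues_iff hB).2 h]
  exact hA.spectral_theorem

lemma Matrix.charpoly_units_conj_kronecker_add {R m n : Type*} [CommRing R] [Fintype m]
    [DecidableEq m] [Fintype n] [DecidableEq n] (U : (Matrix m m R)ˣ) (M : Matrix m m R)
    (E N : Matrix n n R) :
    (((U : Matrix m m R) * M * (↑U⁻¹ : Matrix m m R)) ⊗ₖ E + 1 ⊗ₖ N).charpoly =
      (M ⊗ₖ E + 1 ⊗ₖ N).charpoly := by
  let V : (Matrix (m × n) (m × n) R)ˣ :=
    ⟨(U : Matrix m m R) ⊗ₖ 1, (↑U⁻¹ : Matrix m m R) ⊗ₖ 1,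
      by simp [← mul_kronecker_mul], by simp [← mul_kronecker_mul]⟩
  have hV : ((U : Matrix m m R) * M * (↑U⁻¹ : Matrix m m R)) ⊗ₖ E + 1 ⊗ₖ N =
      (V : Matrix (m × n) (m × n) R) * (M ⊗ₖ E + 1 ⊗ₖ N) * (↑V⁻¹ : Matrix (m × n) (m × n) R) := by
    simp only [V, Units.inv_mk, mul_add, add_mul, ← mul_kronecker_mul, mul_one, one_mul,
      Units.mul_inv]
  rw [hV, coe_units_inv, charpoly_units_conj]

theorem charpoly_signlessLaplacian_rootedProduct_congr {V W : Type*} [Fintype V] [Fintype W]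
    [DecidableEq V] [DecidableEq W] {G₁ G₂ : SimpleGraph V}
    (h : (signlessLaplacian G₁).charpoly = (signlessLaplacian G₂).charpoly)
    (H : SimpleGraph W) (r : W) :
    (signlessLaplacian (G₁.rootedProduct H r)).charpoly =
      (signlessLaplacian (G₂.rootedProduct H r)).charpoly := by
  obtain ⟨U, hU⟩ := (isHermitian_signlessLaplacian G₁).exists_units_conj_of_charpoly_eq
    (isHermitian_signlessLaplacian G₂) h
  rw [signlessLaplacian_rootedProduct, signlessLaplacian_rootedProduct, hU,
    charpoly_units_conj_kronecker_add]

def triangleAndIsolatedVertex : SimpleGraph (Fin 4) :=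
  SimpleGraph.fromRel fun a b ↦ a ≠ 3 ∧ b ≠ 3

lemma not_connected_triangleAndIsolatedVertex : ¬ triangleAndIsolatedVertex.Connected := fun h ↦
  not_reachable_of_neighborSet_right_eq_empty (by decide : (0 : Fin 4) ≠ 3)
    (by ext; simp [triangleAndIsolatedVertex]) (h.preconnected 0 3)

lemma signlessLaplacian_starGraph_fin_four :
    signlessLaplacian (starGraph (0 : Fin 4)) =
      !![3, 1, 1, 1; 1, 1, 0, 0; 1, 0, 1, 0; 1, 0, 0, 1] := by
  ext i j
  fin_cases i <;> fin_cases j <;> simp only [signlessLaplacian_apply, Fin.sum_univ_four] <;>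
    norm_num [Fin.ext_iff]

lemma signlessLaplacian_triangleAndIsolatedVertex :
    signlessLaplacian triangleAndIsolatedVertex =
      !![2, 1, 1, 0; 1, 2, 1, 0; 1, 1, 2, 0; 0, 0, 0, 0] := by
  ext i j
  fin_cases i <;> fin_cases j <;> simp only [signlessLaplacian_apply, Fin.sum_univ_four] <;>
    norm_num [triangleAndIsolatedVertex, Fin.ext_iff]

lemma charpoly_signlessLaplacian_starGraph_fin_four :
    (signlessLaplacian (starGraph (0 : Fin 4))).charpoly = X * (X - 1) ^ 2 * (X - 4) := by
  rw [signlessLaplacian_starGraph_fin_four]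
  simp only [charpoly, det_succ_row_zero, Fin.sum_univ_succ, charmatrix_apply]
  simp [Fin.succAbove, Fin.lt_def, map_ofNat C]
  ring

lemma charpoly_signlessLaplacian_triangleAndIsolatedVertex :
    (signlessLaplacian triangleAndIsolatedVertex).charpoly = X * (X - 1) ^ 2 * (X - 4) := by
  rw [signlessLaplacian_triangleAndIsolatedVertex]
  simp only [charpoly, det_succ_row_zero, Fin.sum_univ_succ, charmatrix_apply]
  simp [Fin.succAbove, Fin.lt_def, map_ofNat C]
  ring

theorem stmt_19 (k : ℕ) (hk : 1 ≤ k) :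
    ∃ T G : SimpleGraph (Fin (4 * k)), T.IsTree ∧ ¬G.IsTree ∧
      (signlessLaplacian T).charpoly = (signlessLaplacian G).charpoly := by
  have : NeZero k := ⟨by omega⟩
  let e : Fin (4 * k) ≃ Fin 4 × Fin k := finProdFinEquiv.symm
  let H := starGraph (0 : Fin k)
  refine ⟨((starGraph 0).rootedProduct H 0).comap e,
    (triangleAndIsolatedVertex.rootedProduct H 0).comap e, ?_, ?_, ?_⟩
  · exact (Iso.comap e _).isTree_iff.2 ((isTree_starGraph 0).rootedProduct (isTree_starGraph 0) 0)
  · exact fun h ↦ not_connected_triangleAndIsolatedVertex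
      ((Iso.comap e _).connected_iff.1 h.connected).of_rootedProduct
  · rw [(Iso.comap e _).charpoly_signlessLaplacian, (Iso.comap e _).charpoly_signlessLaplacian]
    refine charpoly_signlessLaplacian_rootedProduct_congr ?_ H 0
    rw [charpoly_signlessLaplacian_starGraph_fin_four,
      charpoly_signlessLaplacian_triangleAndIsolatedVertex]
end
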